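/- arXiv:quant-ph/0605001 — 6 statements merged into one kernel-verified Lean document; each statement's English description precedes it below -/
import Mathlib

section
/- A Hermitian matrix M of size n×n (over ℂ) is positive semidefinite if and only if every principal minor of M is nonnegative, i.e., for every nonempty subset r of indices, the determinant of the principal submatrix of M obtained by keeping only rows and columns in r is nonnegative. -/
open Matrix ComplexOrder

/-- Expansion of `det (A + t • 1)` as a sum over principal minors. -/
lemma det_add_smul_one_expand (n : ℕ) (A : Matrix (Fin n) (Fin n) ℂ) (t : ℂ) :
    (A + t • 1).det = ∑ s : Finset (Fin n),
      t ^ (n - s.card) *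
        (A.submatrix (fun i : {x // x ∈ s} => (i : Fin n))
          (fun i : {x // x ∈ s} => (i : Fin n))).det := by
  set B : Matrix (Fin n) (Fin n) ℂ := t • 1 with hBdef
  have h1 : (A + B).det = ∑ s : Finset (Fin n), Matrix.det (s.piecewise A B) :=
    (Matrix.detRowAlternating :
      AlternatingMap ℂ (Fin n → ℂ) ℂ (Fin n)).toMultilinearMap.map_add_univ A B
  rw [h1]
  refine Finset.sum_congr rfl fun s _ => ?_
  set N := s.piecewise A B with hN
  have hz : ∀ i, ¬ i ∈ s → ∀ j, j ∈ s → N i j = 0 := by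
    intro i hi j hj
    have : N i j = if i = j then t else 0 := by
      simp [hN, hBdef, Finset.piecewise, hi, Matrix.one_apply, mul_ite]
    rw [this, if_neg (by rintro rfl; exact hi hj)]
  rw [Matrix.twoBlockTriangular_det N (· ∈ s) hz]
  have hA : Matrix.toSquareBlockProp N (· ∈ s)
      = A.submatrix (fun i : {x // x ∈ s} => (i : Fin n))
          (fun i : {x // x ∈ s} => (i : Fin n)) := by
    ext i j
    simp [Matrix.toSquareBlockProp, Matrix.toBlock_apply, hN, Finset.piecewise, i.2]
    exact congrFun (Finset.piecewise_eq_of_mem s A B i.2) j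
  have hB : Matrix.toSquareBlockProp N (fun i => ¬ i ∈ s)
      = t • (1 : Matrix {x // ¬ x ∈ s} {x // ¬ x ∈ s} ℂ) := by
    ext i j
    have hi : ¬ (i : Fin n) ∈ s := i.2
    show N (i : Fin n) (j : Fin n) = (t • (1 : Matrix {x // ¬ x ∈ s} {x // ¬ x ∈ s} ℂ)) i j
    have hNij : N (i : Fin n) (j : Fin n) = t * (if (i : Fin n) = (j : Fin n) then 1 else 0) := by
      simp [hN, hBdef, Finset.piecewise, hi, Matrix.one_apply]
    rw [hNij, Matrix.smul_apply, Matrix.one_apply, smul_eq_mul]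
    by_cases hij : (i : Fin n) = (j : Fin n)
    · rw [if_pos hij, if_pos (Subtype.ext hij)]
    · rw [if_neg hij, if_neg (fun h => hij (congrArg _ h))]
  rw [hA, hB, Matrix.det_smul, Matrix.det_one, mul_one]
  have hcard : Fintype.card {x // ¬ x ∈ s} = n - s.card := by
    simp [Fintype.card_subtype_compl]
  rw [hcard, mul_comm]
  congr!

/-- A Hermitian matrix is positive semidefinite iff all its principal minors are
nonnegative. -/
theorem posSemidef_iff_principal_minors_nonneg (n : ℕ)
    (M : Matrix (Fin n) (Fin n) ℂ) (hM : M.IsHermitian) :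
    M.PosSemidef ↔
      ∀ r : Finset (Fin n), r.Nonempty →
        0 ≤ (M.submatrix (fun i : {x // x ∈ r} => (i : Fin n))
              (fun i : {x // x ∈ r} => (i : Fin n))).det := by
  constructor
  · intro hMp r _
    have h := hMp.submatrix (fun i : {x // x ∈ r} => (i : Fin n))
    rw [h.1.det_eq_prod_eigenvalues]
    exact Finset.prod_nonneg fun i _ =>
      Complex.zero_le_real.mpr (h.eigenvalues_nonneg i)
  · intro h
    refine hM.posSemidef_iff_eigenvalues_nonneg.mpr fun i => ?_
    by_contra hlt
    push_neg at hlt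
    set t : ℝ := -hM.eigenvalues i with htdef
    have ht : 0 < t := by simpa [htdef] using hlt
    have htc : (0 : ℂ) < (t : ℂ) := by exact_mod_cast ht
    -- det (M + t • 1) = 0 since -t is an eigenvalue
    have hdet0 : (M + (t : ℂ) • 1).det = 0 := by
      have hspec := hM.spectral_theorem
      have hU := (Matrix.mem_unitaryGroup_iff).mp (hM.eigenvectorUnitary).2
      have key : M + (t : ℂ) • 1
          = (hM.eigenvectorUnitary : Matrix (Fin n) (Fin n) ℂ)
            * Matrix.diagonal (fun j => ((hM.eigenvalues j : ℂ) + t))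
            * star (hM.eigenvectorUnitary : Matrix (Fin n) (Fin n) ℂ) := by
        have h2 : (t : ℂ) • (1 : Matrix (Fin n) (Fin n) ℂ)
            = (hM.eigenvectorUnitary : Matrix (Fin n) (Fin n) ℂ)
              * ((t : ℂ) • (1 : Matrix (Fin n) (Fin n) ℂ))
              * star (hM.eigenvectorUnitary : Matrix (Fin n) (Fin n) ℂ) := by
          rw [Matrix.mul_smul, mul_one, Matrix.smul_mul, hU]
        have hdiag : Matrix.diagonal (RCLike.ofReal ∘ hM.eigenvalues)
            + (t : ℂ) • (1 : Matrix (Fin n) (Fin n) ℂ)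
            = Matrix.diagonal (fun j => ((hM.eigenvalues j : ℂ) + t)) := by
          ext j k
          by_cases hjk : j = k
          · subst hjk; simp [Matrix.one_apply]
          · simp [Matrix.one_apply, hjk, Matrix.diagonal_apply_ne _ hjk]
        conv_lhs => rw [hspec, h2]
        rw [Unitary.conjStarAlgAut_apply]
        rw [← add_mul, ← Matrix.mul_add, hdiag]
      rw [key, Matrix.det_mul, Matrix.det_mul, mul_comm, ← mul_assoc, ← Matrix.det_mul]
      have hU' : star (hM.eigenvectorUnitary : Matrix (Fin n) (Fin n) ℂ)
          * (hM.eigenvectorUnitary : Matrix (Fin n) (Fin n) ℂ) = 1 :=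
        (Matrix.mem_unitaryGroup_iff').mp (hM.eigenvectorUnitary).2
      rw [hU', Matrix.det_one, one_mul, Matrix.det_diagonal]
      refine Finset.prod_eq_zero (Finset.mem_univ i) ?_
      simp [htdef]
    -- but det (M + t • 1) > 0 by the minor expansion
    have hpos : (0 : ℂ) < (M + (t : ℂ) • 1).det := by
      rw [det_add_smul_one_expand]
      have hterm : ∀ s : Finset (Fin n), 0 ≤ (t : ℂ) ^ (n - s.card) *
          (M.submatrix (fun i : {x // x ∈ s} => (i : Fin n))
            (fun i : {x // x ∈ s} => (i : Fin n))).det := by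
        intro s
        rcases s.eq_empty_or_nonempty with rfl | hs
        · have : IsEmpty {x : Fin n // x ∈ (∅ : Finset (Fin n))} := by
            simp [Finset.isEmpty_coe_sort]
            exact ⟨fun x => x.2⟩
          rw [Matrix.det_isEmpty, mul_one]
          exact pow_nonneg htc.le _
        · exact mul_nonneg (pow_nonneg htc.le _) (h s hs)
      have hempty : (0 : ℂ) < (t : ℂ) ^ (n - (∅ : Finset (Fin n)).card) *
          (M.submatrix (fun i : {x // x ∈ (∅ : Finset (Fin n))} => (i : Fin n))
            (fun i : {x // x ∈ (∅ : Finset (Fin n))} => (i : Fin n))).det := by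
        have : IsEmpty {x : Fin n // x ∈ (∅ : Finset (Fin n))} := by
          simp [Finset.isEmpty_coe_sort]
          exact ⟨fun x => x.2⟩
        rw [Matrix.det_isEmpty, mul_one]
        exact pow_pos htc _
      calc (0 : ℂ) < _ := hempty
        _ ≤ _ := Finset.single_le_sum (fun s _ => hterm s) (Finset.mem_univ ∅)
    rw [hdet0] at hpos
    exact lt_irrefl 0 hpos
end

section
/- Let M be a positive semidefinite matrix on ℂ^{d_A} ⊗ ℂ^{d_B} that is separable, i.e., M = Σ_i p_i A_i ⊗ B_i where p_i ≥ 0 and A_i, B_i are positive semidefinite. Then the partial transpose of M (transposition on the second factor) is also positive semidefinite. -/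
open Matrix Kronecker ComplexOrder

lemma kron_conjTranspose {m n : Type} [Fintype m] [Fintype n]
    (A : Matrix m m ℂ) (B : Matrix n n ℂ) : (A ⊗ₖ B)ᴴ = Aᴴ ⊗ₖ Bᴴ := by
  ext ⟨i, j⟩ ⟨k, l⟩
  simp [conjTranspose_apply, kroneckerMap_apply]

lemma posSemidef_kron {m n : Type} [Fintype m] [Fintype n] [DecidableEq m] [DecidableEq n]
    {A : Matrix m m ℂ} {B : Matrix n n ℂ} (hA : A.PosSemidef) (hB : B.PosSemidef) :
    (A ⊗ₖ B).PosSemidef := by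
  exact hA.kronecker hB

lemma posSemidef_smul {n : Type} [Fintype n] {M : Matrix n n ℂ} (hM : M.PosSemidef)
    {c : ℝ} (hc : 0 ≤ c) : ((c : ℂ) • M).PosSemidef := by
  rw [posSemidef_iff_dotProduct_mulVec]
  constructor
  · unfold Matrix.IsHermitian
    rw [conjTranspose_smul, hM.1]
    simp
  · intro x
    rw [smul_mulVec, dotProduct_smul, smul_eq_mul]
    exact mul_nonneg (by exact_mod_cast hc) (hM.dotProduct_mulVec_nonneg x)

/-- The partial transpose (transposition on the second factor) of a separable
positive semidefinite matrix is positive semidefinite. -/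
theorem partialTranspose_posSemidef_of_separable
    (dA dB : ℕ) (ι : Type) [Fintype ι]
    (p : ι → ℝ)
    (A : ι → Matrix (Fin dA) (Fin dA) ℂ)
    (B : ι → Matrix (Fin dB) (Fin dB) ℂ)
    (hp : ∀ i, 0 ≤ p i)
    (hA : ∀ i, (A i).PosSemidef)
    (hB : ∀ i, (B i).PosSemidef)
    (M : Matrix (Fin dA × Fin dB) (Fin dA × Fin dB) ℂ)
    (hM : M = ∑ i, (p i : ℂ) • (A i ⊗ₖ B i)) :
    (Matrix.of fun kl k'l' : Fin dA × Fin dB =>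
        M (kl.1, k'l'.2) (k'l'.1, kl.2)).PosSemidef := by
  have key : (Matrix.of fun kl k'l' : Fin dA × Fin dB =>
      M (kl.1, k'l'.2) (k'l'.1, kl.2)) = ∑ i, (p i : ℂ) • (A i ⊗ₖ (B i)ᵀ) := by
    subst hM
    ext ⟨k, l⟩ ⟨k', l'⟩
    simp only [Matrix.of_apply, Finset.sum_apply, Matrix.sum_apply, Matrix.smul_apply,
      kroneckerMap_apply, Matrix.transpose_apply]
  rw [key]
  exact Finset.sum_induction _ Matrix.PosSemidef (fun _ _ h1 h2 => h1.add h2)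
    Matrix.PosSemidef.zero
    (fun i _ => posSemidef_smul (posSemidef_kron (hA i) ((hB i).transpose)) (hp i))
end

section
/- (Hillery–Zubairy via Cauchy–Schwarz, finite-dimensional version) For any density matrix ρ that is separable on ℂ^{d_A} ⊗ ℂ^{d_B} and any matrices a on ℂ^{d_A}, b on ℂ^{d_B}: |Tr(ρ (a ⊗ b))|² ≤ Tr(ρ (a†a ⊗ I)) · Tr(ρ (I ⊗ b†b)). -/
open Matrix Kronecker ComplexOrder

lemma frob_inner_eq {d : ℕ} (M N : Matrix (Fin d) (Fin d) ℂ) :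
    (inner (𝕜 := ℂ) (E := EuclideanSpace ℂ (Fin d × Fin d))
      (WithLp.toLp 2 (fun p : Fin d × Fin d => M p.1 p.2)) (WithLp.toLp 2 (fun p : Fin d × Fin d => N p.1 p.2))) = (Mᴴ * N).trace := by
  simp only [PiLp.inner_apply, RCLike.inner_apply, Matrix.trace, Matrix.diag,
    Matrix.mul_apply, Matrix.conjTranspose_apply, Fintype.sum_prod_type,
    starRingEnd_apply, PiLp.toLp_apply]
  rw [Finset.sum_comm]
  exact Finset.sum_congr rfl fun _ _ => Finset.sum_congr rfl fun _ _ => mul_comm _ _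

open scoped MatrixOrder in
lemma key_cs {d : ℕ} (ρ : Matrix (Fin d) (Fin d) ℂ) (hρ : ρ.PosSemidef)
    (htr : ρ.trace = 1) (a : Matrix (Fin d) (Fin d) ℂ) :
    ‖(ρ * a).trace‖ ^ 2 ≤ ((ρ * (aᴴ * a)).trace).re := by
  set c := CFC.sqrt ρ with hc
  have hcc : c * c = ρ := CFC.sqrt_mul_sqrt_self ρ hρ.nonneg
  have hch : cᴴ = c := (CFC.sqrt_nonneg ρ).posSemidef.1
  set x : EuclideanSpace ℂ (Fin d × Fin d) := WithLp.toLp 2 (fun p : Fin d × Fin d => c p.1 p.2)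
  set y : EuclideanSpace ℂ (Fin d × Fin d) := WithLp.toLp 2 (fun p : Fin d × Fin d => (a * c) p.1 p.2)
  have hxy : inner (𝕜 := ℂ) x y = (ρ * a).trace := by
    rw [frob_inner_eq, hch, ← hcc, Matrix.trace_mul_cycle, Matrix.mul_assoc,
      Matrix.trace_mul_comm, Matrix.mul_assoc]
  have hxx : inner (𝕜 := ℂ) x x = (1 : ℂ) := by
    rw [frob_inner_eq, hch, hcc, htr]
  have hyy : inner (𝕜 := ℂ) y y = (ρ * (aᴴ * a)).trace := by
    rw [frob_inner_eq, Matrix.conjTranspose_mul, hch, ← hcc,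
      ← Matrix.mul_assoc, Matrix.trace_mul_cycle (c * aᴴ) a c,
      ← Matrix.mul_assoc c c aᴴ, Matrix.mul_assoc (c * c) aᴴ a]
  have h := norm_inner_le_norm (𝕜 := ℂ) x y
  have hx2 : ‖x‖ ^ 2 = 1 := by
    rw [norm_sq_eq_re_inner (𝕜 := ℂ), hxx]; simp
  have hy2 : ‖y‖ ^ 2 = ((ρ * (aᴴ * a)).trace).re := by
    rw [norm_sq_eq_re_inner (𝕜 := ℂ), hyy]; rfl
  calc ‖(ρ * a).trace‖ ^ 2 = ‖inner (𝕜 := ℂ) x y‖ ^ 2 := by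
        rw [hxy]
    _ ≤ (‖x‖ * ‖y‖) ^ 2 := by
        apply pow_le_pow_left₀ (norm_nonneg _) h
    _ = ‖x‖ ^ 2 * ‖y‖ ^ 2 := by ring
    _ = ((ρ * (aᴴ * a)).trace).re := by rw [hx2, hy2, one_mul]

/-- Hillery-Zubairy via Cauchy-Schwarz, finite-dimensional version: for a
separable density matrix ρ,
`|Tr(ρ (a ⊗ b))|² ≤ Tr(ρ (a†a ⊗ I)) · Tr(ρ (I ⊗ b†b))`. -/
theorem hillery_zubairy_cauchy_schwarz
    (dA dB : ℕ) (ι : Type) [Fintype ι]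
    (p : ι → ℝ)
    (ρA : ι → Matrix (Fin dA) (Fin dA) ℂ)
    (ρB : ι → Matrix (Fin dB) (Fin dB) ℂ)
    (hp : ∀ i, 0 ≤ p i) (hpsum : ∑ i, p i = 1)
    (hρA : ∀ i, (ρA i).PosSemidef) (hρAtr : ∀ i, (ρA i).trace = 1)
    (hρB : ∀ i, (ρB i).PosSemidef) (hρBtr : ∀ i, (ρB i).trace = 1)
    (ρ : Matrix (Fin dA × Fin dB) (Fin dA × Fin dB) ℂ)
    (hρ : ρ = ∑ i, (p i : ℂ) • (ρA i ⊗ₖ ρB i))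
    (a : Matrix (Fin dA) (Fin dA) ℂ) (b : Matrix (Fin dB) (Fin dB) ℂ) :
    ‖(ρ * (a ⊗ₖ b)).trace‖ ^ 2
      ≤ ((ρ * ((aᴴ * a) ⊗ₖ (1 : Matrix (Fin dB) (Fin dB) ℂ))).trace).re
        * ((ρ * ((1 : Matrix (Fin dA) (Fin dA) ℂ) ⊗ₖ (bᴴ * b))).trace).re := by
  subst hρ
  set X : ι → ℝ := fun i => ((ρA i * (aᴴ * a)).trace).re with hX
  set Y : ι → ℝ := fun i => ((ρB i * (bᴴ * b)).trace).re with hY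
  have hXb : ∀ i, ‖(ρA i * a).trace‖ ^ 2 ≤ X i :=
    fun i => key_cs _ (hρA i) (hρAtr i) a
  have hYb : ∀ i, ‖(ρB i * b).trace‖ ^ 2 ≤ Y i :=
    fun i => key_cs _ (hρB i) (hρBtr i) b
  have hXnn : ∀ i, 0 ≤ X i := fun i => le_trans (sq_nonneg _) (hXb i)
  have hYnn : ∀ i, 0 ≤ Y i := fun i => le_trans (sq_nonneg _) (hYb i)
  have hAab : ∀ i, ‖(ρA i * a).trace‖ ≤ Real.sqrt (X i) :=
    fun i => Real.le_sqrt_of_sq_le (hXb i)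
  have hBab : ∀ i, ‖(ρB i * b).trace‖ ≤ Real.sqrt (Y i) :=
    fun i => Real.le_sqrt_of_sq_le (hYb i)
  have expand : ∀ (M : Matrix (Fin dA) (Fin dA) ℂ) (N : Matrix (Fin dB) (Fin dB) ℂ),
      (((∑ i, (p i : ℂ) • (ρA i ⊗ₖ ρB i)) * (M ⊗ₖ N)).trace)
        = ∑ i, (p i : ℂ) * ((ρA i * M).trace * (ρB i * N).trace) := by
    intro M N
    rw [Matrix.sum_mul, Matrix.trace_sum]
    refine Finset.sum_congr rfl fun i _ => ?_
    rw [Matrix.smul_mul, Matrix.trace_smul, ← Matrix.mul_kronecker_mul,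
      Matrix.trace_kronecker, smul_eq_mul]
  have e2 : (((∑ i, (p i : ℂ) • (ρA i ⊗ₖ ρB i)) *
      ((aᴴ * a) ⊗ₖ (1 : Matrix (Fin dB) (Fin dB) ℂ))).trace).re = ∑ i, p i * X i := by
    rw [expand, Complex.re_sum]
    refine Finset.sum_congr rfl fun i _ => ?_
    rw [Matrix.mul_one, hρBtr i, mul_one, Complex.re_ofReal_mul]
  have e3 : (((∑ i, (p i : ℂ) • (ρA i ⊗ₖ ρB i)) *
      ((1 : Matrix (Fin dA) (Fin dA) ℂ) ⊗ₖ (bᴴ * b))).trace).re = ∑ i, p i * Y i := by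
    rw [expand, Complex.re_sum]
    refine Finset.sum_congr rfl fun i _ => ?_
    rw [Matrix.mul_one, hρAtr i, one_mul, Complex.re_ofReal_mul]
  rw [e2, e3, expand]
  calc ‖∑ i, (p i : ℂ) * ((ρA i * a).trace * (ρB i * b).trace)‖ ^ 2
      ≤ (∑ i, p i * (Real.sqrt (X i) * Real.sqrt (Y i))) ^ 2 := by
        apply pow_le_pow_left₀ (norm_nonneg _)
        refine le_trans (norm_sum_le _ _) (Finset.sum_le_sum fun i _ => ?_)
        rw [norm_mul, norm_mul, Complex.norm_real, Real.norm_eq_abs, abs_of_nonneg (hp i)]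
        exact mul_le_mul_of_nonneg_left
          (mul_le_mul (hAab i) (hBab i) (norm_nonneg _) (Real.sqrt_nonneg _))
          (hp i)
    _ = (∑ i, (Real.sqrt (p i) * Real.sqrt (X i)) * (Real.sqrt (p i) * Real.sqrt (Y i))) ^ 2 := by
        refine congrArg (· ^ 2) (Finset.sum_congr rfl fun i _ => ?_)
        rw [mul_mul_mul_comm, Real.mul_self_sqrt (hp i)]
    _ ≤ (∑ i, (Real.sqrt (p i) * Real.sqrt (X i)) ^ 2)
          * (∑ i, (Real.sqrt (p i) * Real.sqrt (Y i)) ^ 2) :=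
        Finset.sum_mul_sq_le_sq_mul_sq _ _ _
    _ ≤ (∑ i, p i * X i) * (∑ i, p i * Y i) := by
        apply le_of_eq
        congr 1 <;> refine Finset.sum_congr rfl fun i _ => ?_ <;>
          rw [mul_pow, Real.sq_sqrt (hp i)]
        · rw [Real.sq_sqrt (hXnn i)]
        · rw [Real.sq_sqrt (hYnn i)]
end

section
/- (Three-party Hillery–Zubairy) For any separable-across-the-(A|BC)-cut density matrix ρ on ℂ^{d_A} ⊗ ℂ^{d_B} ⊗ ℂ^{d_C} and matrices a, b, c on the respective factors: |Tr(ρ (a ⊗ b ⊗ c))|² ≤ Tr(ρ (a†a ⊗ I ⊗ I)) · Tr(ρ (I ⊗ b†b ⊗ c†c)). -/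
open Matrix Kronecker ComplexOrder

-- Cauchy–Schwarz for complex sums
lemma cs_sum {α : Type*} [Fintype α] (x y : α → ℂ) :
    ‖∑ i, (starRingEnd ℂ) (x i) * y i‖ ^ 2
      ≤ (∑ i, Complex.normSq (x i)) * (∑ i, Complex.normSq (y i)) := by
  let X : EuclideanSpace ℂ α := WithLp.toLp 2 x
  let Y : EuclideanSpace ℂ α := WithLp.toLp 2 y
  have h := norm_inner_le_norm (𝕜 := ℂ) X Y
  have hinner : (inner ℂ X Y : ℂ) = ∑ i, (starRingEnd ℂ) (x i) * y i := by
    simp [X, Y, PiLp.inner_apply, RCLike.inner_apply, mul_comm]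
  have hX : ‖X‖ ^ 2 = ∑ i, Complex.normSq (x i) := by
    rw [EuclideanSpace.norm_eq, Real.sq_sqrt (by positivity)]
    simp [X, Complex.sq_norm]
  have hY : ‖Y‖ ^ 2 = ∑ i, Complex.normSq (y i) := by
    rw [EuclideanSpace.norm_eq, Real.sq_sqrt (by positivity)]
    simp [Y, Complex.sq_norm]
  calc ‖∑ i, (starRingEnd ℂ) (x i) * y i‖ ^ 2
      = ‖(inner ℂ X Y : ℂ)‖ ^ 2 := by rw [hinner]
    _ ≤ (‖X‖ * ‖Y‖) ^ 2 := by
        have := mul_le_mul h h (norm_nonneg _) (mul_nonneg (norm_nonneg _) (norm_nonneg _))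
        simpa [pow_two] using this
    _ = (∑ i, Complex.normSq (x i)) * (∑ i, Complex.normSq (y i)) := by
        rw [mul_pow, hX, hY]

lemma trace_conjTranspose_mul (n : Type*) [Fintype n] (X Y : Matrix n n ℂ) :
    (Xᴴ * Y).trace = ∑ ij : n × n, (starRingEnd ℂ) (X ij.1 ij.2) * Y ij.1 ij.2 := by
  rw [Matrix.trace, Fintype.sum_prod_type]
  simp [Matrix.diag, Matrix.mul_apply, Matrix.conjTranspose_apply]
  rw [Finset.sum_comm]

open scoped MatrixOrder in
lemma trace_cs {n : Type*} [Fintype n] [DecidableEq n] {ρ : Matrix n n ℂ}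
    (hρ : ρ.PosSemidef) (M : Matrix n n ℂ) :
    ‖(ρ * M).trace‖ ^ 2 ≤ ((ρ * (Mᴴ * M)).trace).re * ρ.trace.re := by
  set S := CFC.sqrt ρ with hS
  have hSH : Sᴴ = S := (CFC.sqrt_nonneg ρ).posSemidef.isHermitian
  have hSS : S * S = ρ := CFC.sqrt_mul_sqrt_self ρ hρ.nonneg
  have h1 : (ρ * M).trace = (Sᴴ * (M * S)).trace := by
    rw [hSH, ← hSS]
    rw [Matrix.mul_assoc, Matrix.trace_mul_comm, Matrix.mul_assoc]
  have h2 : (Sᴴ * S).trace = ρ.trace := by rw [hSH, hSS]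
  have h3 : ((M * S)ᴴ * (M * S)).trace = (ρ * (Mᴴ * M)).trace := by
    have e : (M * S)ᴴ * (M * S) = S * (Mᴴ * M * S) := by
      rw [Matrix.conjTranspose_mul, hSH]; simp [Matrix.mul_assoc]
    rw [e, Matrix.trace_mul_comm, Matrix.mul_assoc, hSS, Matrix.trace_mul_comm]
  have key := cs_sum (fun ij : n × n => S ij.1 ij.2) (fun ij : n × n => (M * S) ij.1 ij.2)
  rw [← trace_conjTranspose_mul] at key
  have hre1 : (∑ ij : n × n, Complex.normSq (S ij.1 ij.2)) = ρ.trace.re := by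
    rw [← h2, trace_conjTranspose_mul]
    simp [Complex.mul_conj', Complex.normSq]
  have hre2 : (∑ ij : n × n, Complex.normSq ((M * S) ij.1 ij.2))
      = ((ρ * (Mᴴ * M)).trace).re := by
    rw [← h3, trace_conjTranspose_mul]
    simp [Complex.mul_conj', Complex.normSq]
  rw [hre1, hre2] at key
  rw [h1]
  rw [mul_comm] at key
  exact key

open scoped MatrixOrder in
lemma trace_psd_re_nonneg {n : Type*} [Fintype n] [DecidableEq n] {ρ : Matrix n n ℂ}
    (hρ : ρ.PosSemidef) (M : Matrix n n ℂ) :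
    0 ≤ ((ρ * (Mᴴ * M)).trace).re := by
  set S := CFC.sqrt ρ with hS
  have hSH : Sᴴ = S := (CFC.sqrt_nonneg ρ).posSemidef.isHermitian
  have hSS : S * S = ρ := CFC.sqrt_mul_sqrt_self ρ hρ.nonneg
  have h3 : ((M * S)ᴴ * (M * S)).trace = (ρ * (Mᴴ * M)).trace := by
    have e : (M * S)ᴴ * (M * S) = S * (Mᴴ * M * S) := by
      rw [Matrix.conjTranspose_mul, hSH]; simp [Matrix.mul_assoc]
    rw [e, Matrix.trace_mul_comm, Matrix.mul_assoc, hSS, Matrix.trace_mul_comm]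
  rw [← h3, trace_conjTranspose_mul]
  have : (∑ ij : n × n, (starRingEnd ℂ) ((M * S) ij.1 ij.2) * (M * S) ij.1 ij.2).re
      = ∑ ij : n × n, Complex.normSq ((M * S) ij.1 ij.2) := by
    simp [Complex.mul_conj', Complex.normSq]
  rw [this]
  exact Finset.sum_nonneg fun _ _ => Complex.normSq_nonneg _

lemma kron_conjT {m n : Type*} [Fintype m] [Fintype n]
    (A : Matrix m m ℂ) (B : Matrix n n ℂ) : (A ⊗ₖ B)ᴴ = Aᴴ ⊗ₖ Bᴴ := by
  ext ⟨i, k⟩ ⟨j, l⟩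
  simp [Matrix.conjTranspose_apply, Matrix.kroneckerMap_apply]
/-- Three-party Hillery-Zubairy: for ρ separable across the A|(BC) cut,
`|Tr(ρ (a ⊗ b ⊗ c))|² ≤ Tr(ρ (a†a ⊗ I ⊗ I)) · Tr(ρ (I ⊗ b†b ⊗ c†c))`. -/
theorem three_party_hillery_zubairy
    (dA dB dC : ℕ) (ι : Type) [Fintype ι]
    (p : ι → ℝ)
    (ρA : ι → Matrix (Fin dA) (Fin dA) ℂ)
    (ρBC : ι → Matrix (Fin dB × Fin dC) (Fin dB × Fin dC) ℂ)
    (hp : ∀ i, 0 ≤ p i) (hpsum : ∑ i, p i = 1)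
    (hρA : ∀ i, (ρA i).PosSemidef) (hρAtr : ∀ i, (ρA i).trace = 1)
    (hρBC : ∀ i, (ρBC i).PosSemidef) (hρBCtr : ∀ i, (ρBC i).trace = 1)
    (ρ : Matrix (Fin dA × (Fin dB × Fin dC)) (Fin dA × (Fin dB × Fin dC)) ℂ)
    (hρ : ρ = ∑ i, (p i : ℂ) • (ρA i ⊗ₖ ρBC i))
    (a : Matrix (Fin dA) (Fin dA) ℂ) (b : Matrix (Fin dB) (Fin dB) ℂ)
    (c : Matrix (Fin dC) (Fin dC) ℂ) :
    ‖(ρ * (a ⊗ₖ (b ⊗ₖ c))).trace‖ ^ 2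
      ≤ ((ρ * ((aᴴ * a) ⊗ₖ ((1 : Matrix (Fin dB) (Fin dB) ℂ)
              ⊗ₖ (1 : Matrix (Fin dC) (Fin dC) ℂ)))).trace).re
        * ((ρ * ((1 : Matrix (Fin dA) (Fin dA) ℂ)
              ⊗ₖ ((bᴴ * b) ⊗ₖ (cᴴ * c)))).trace).re := by
  set x : ι → ℂ := fun i => (ρA i * a).trace with hx'
  set y : ι → ℂ := fun i => (ρBC i * (b ⊗ₖ c)).trace with hy'
  set X : ι → ℝ := fun i => ((ρA i * (aᴴ * a)).trace).re with hX'
  set Y : ι → ℝ := fun i => ((ρBC i * ((bᴴ * b) ⊗ₖ (cᴴ * c))).trace).re with hY'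
  -- trace identities
  have hA : (ρ * (a ⊗ₖ (b ⊗ₖ c))).trace = ∑ i, (p i : ℂ) * (x i * y i) := by
    rw [hρ, Finset.sum_mul, Matrix.trace_sum]
    refine Finset.sum_congr rfl fun i _ => ?_
    rw [Matrix.smul_mul, Matrix.trace_smul, ← Matrix.mul_kronecker_mul,
      Matrix.trace_kronecker, smul_eq_mul]
  have hB : (ρ * ((aᴴ * a) ⊗ₖ ((1 : Matrix (Fin dB) (Fin dB) ℂ)
        ⊗ₖ (1 : Matrix (Fin dC) (Fin dC) ℂ)))).trace = ∑ i, (p i : ℂ) * (ρA i * (aᴴ * a)).trace := by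
    rw [hρ, Finset.sum_mul, Matrix.trace_sum]
    refine Finset.sum_congr rfl fun i _ => ?_
    rw [Matrix.smul_mul, Matrix.trace_smul, ← Matrix.mul_kronecker_mul,
      Matrix.trace_kronecker, Matrix.one_kronecker_one, mul_one, hρBCtr i, mul_one, smul_eq_mul]
  have hC : (ρ * ((1 : Matrix (Fin dA) (Fin dA) ℂ)
        ⊗ₖ ((bᴴ * b) ⊗ₖ (cᴴ * c)))).trace = ∑ i, (p i : ℂ) * (ρBC i * ((bᴴ * b) ⊗ₖ (cᴴ * c))).trace := by
    rw [hρ, Finset.sum_mul, Matrix.trace_sum]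
    refine Finset.sum_congr rfl fun i _ => ?_
    rw [Matrix.smul_mul, Matrix.trace_smul, ← Matrix.mul_kronecker_mul,
      Matrix.trace_kronecker, mul_one, hρAtr i, one_mul, smul_eq_mul]
  have hBre : ((ρ * ((aᴴ * a) ⊗ₖ ((1 : Matrix (Fin dB) (Fin dB) ℂ)
        ⊗ₖ (1 : Matrix (Fin dC) (Fin dC) ℂ)))).trace).re = ∑ i, p i * X i := by
    rw [hB, Complex.re_sum]
    exact Finset.sum_congr rfl fun i _ => Complex.re_ofReal_mul _ _
  have hCre : ((ρ * ((1 : Matrix (Fin dA) (Fin dA) ℂ)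
        ⊗ₖ ((bᴴ * b) ⊗ₖ (cᴴ * c)))).trace).re = ∑ i, p i * Y i := by
    rw [hC, Complex.re_sum]
    exact Finset.sum_congr rfl fun i _ => Complex.re_ofReal_mul _ _
  -- per-index Cauchy–Schwarz
  have hxX : ∀ i, ‖x i‖ ^ 2 ≤ X i := by
    intro i
    have := trace_cs (hρA i) a
    rwa [hρAtr i, Complex.one_re, mul_one] at this
  have hyY : ∀ i, ‖y i‖ ^ 2 ≤ Y i := by
    intro i
    have := trace_cs (hρBC i) (b ⊗ₖ c)
    rw [hρBCtr i, Complex.one_re, mul_one, kron_conjT, ← Matrix.mul_kronecker_mul] at this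
    exact this
  have hXnn : ∀ i, 0 ≤ X i := fun i => trace_psd_re_nonneg (hρA i) a
  have hYnn : ∀ i, 0 ≤ Y i := fun i => by
    have := trace_psd_re_nonneg (hρBC i) (b ⊗ₖ c)
    rwa [kron_conjT, ← Matrix.mul_kronecker_mul] at this
  -- real Cauchy–Schwarz over the ensemble
  have key : (∑ i, p i * (‖x i‖ * ‖y i‖)) ^ 2
      ≤ (∑ i, p i * X i) * (∑ i, p i * Y i) := by
    have h1 := Finset.sum_mul_sq_le_sq_mul_sq Finset.univ
      (fun i => Real.sqrt (p i) * ‖x i‖)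
      (fun i => Real.sqrt (p i) * ‖y i‖)
    have e1 : ∀ i : ι, (Real.sqrt (p i) * ‖x i‖) * (Real.sqrt (p i) * ‖y i‖)
        = p i * (‖x i‖ * ‖y i‖) := by
      intro i
      rw [show (Real.sqrt (p i) * ‖x i‖) * (Real.sqrt (p i) * ‖y i‖)
          = (Real.sqrt (p i) * Real.sqrt (p i)) * (‖x i‖ * ‖y i‖) by ring,
        Real.mul_self_sqrt (hp i)]
    have e2 : ∀ i : ι, (Real.sqrt (p i) * ‖x i‖) ^ 2 = p i * ‖x i‖ ^ 2 := by
      intro i; rw [mul_pow, Real.sq_sqrt (hp i)]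
    have e3 : ∀ i : ι, (Real.sqrt (p i) * ‖y i‖) ^ 2 = p i * ‖y i‖ ^ 2 := by
      intro i; rw [mul_pow, Real.sq_sqrt (hp i)]
    simp only [e1, e2, e3] at h1
    refine h1.trans (mul_le_mul ?_ ?_ ?_ ?_)
    · exact Finset.sum_le_sum fun i _ => mul_le_mul_of_nonneg_left (hxX i) (hp i)
    · exact Finset.sum_le_sum fun i _ => mul_le_mul_of_nonneg_left (hyY i) (hp i)
    · exact Finset.sum_nonneg fun i _ => mul_nonneg (hp i) (sq_nonneg _)
    · exact Finset.sum_nonneg fun i _ => mul_nonneg (hp i) (hXnn i)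
  rw [hA, hBre, hCre]
  refine le_trans ?_ key
  have habs : ‖∑ i, (p i : ℂ) * (x i * y i)‖
      ≤ ∑ i, p i * (‖x i‖ * ‖y i‖) := by
    refine (norm_sum_le _ _).trans_eq ?_
    refine Finset.sum_congr rfl fun i _ => ?_
    rw [norm_mul, norm_mul, Complex.norm_real, Real.norm_eq_abs, abs_of_nonneg (hp i)]
  exact pow_le_pow_left₀ (norm_nonneg _) habs 2
end

section
/- The Choi map Λ on 3×3 complex matrices defined by Λ(A) = -A + diag(2A₁₁ + A₃₃, 2A₂₂ + A₁₁, 2A₃₃ + A₂₂) (the Størmer map, the Choi map with α=2, β=0, γ=1) maps every positive semidefinite matrix to a positive semidefinite matrix. -/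
open Matrix ComplexOrder

lemma stormer_amgm (u v w : ℝ) (hu : 0 ≤ u) (hv : 0 ≤ v) (hw : 0 ≤ w) :
    3*(u*v*w) ≤ u^2*v + v^2*w + w^2*u := by
  rcases le_total u v with h1 | h1 <;> rcases le_total v w with h2 | h2 <;>
    rcases le_total u w with h3 | h3 <;>
    nlinarith [mul_nonneg hu (sq_nonneg (v-w)), mul_nonneg hv (sq_nonneg (w-u)),
      mul_nonneg hw (sq_nonneg (u-v)), mul_nonneg hv (sq_nonneg (u-w)),
      mul_nonneg hu (sq_nonneg (u-v)), mul_nonneg hw (sq_nonneg (v-w)),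
      mul_nonneg hu (sq_nonneg (u-w)), mul_nonneg hv (sq_nonneg (u-v)),
      mul_nonneg hw (sq_nonneg (w-u))]

lemma stormer_key (a b c x y z : ℝ) :
    (a*x + b*y + c*z)^2 ≤
      (2*a^2 + c^2)*x^2 + (2*b^2 + a^2)*y^2 + (2*c^2 + b^2)*z^2 := by
  set d1 : ℝ := 2*a^2 + c^2 with hd1
  set d2 : ℝ := 2*b^2 + a^2 with hd2
  set d3 : ℝ := 2*c^2 + b^2 with hd3
  rcases eq_or_lt_of_le (by positivity : (0:ℝ) ≤ d1) with h1 | h1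
  · have ha : a = 0 := by nlinarith [sq_nonneg a, sq_nonneg c]
    have hc : c = 0 := by nlinarith [sq_nonneg a, sq_nonneg c]
    subst ha; subst hc; simp [hd1, hd2, hd3]; nlinarith [sq_nonneg (b*y), sq_nonneg (b*z)]
  rcases eq_or_lt_of_le (by positivity : (0:ℝ) ≤ d2) with h2 | h2
  · have hb : b = 0 := by nlinarith [sq_nonneg a, sq_nonneg b]
    have ha : a = 0 := by nlinarith [sq_nonneg a, sq_nonneg b]
    subst ha; subst hb; simp [hd1, hd2, hd3]; nlinarith [sq_nonneg (c*z), sq_nonneg (c*x)]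
  rcases eq_or_lt_of_le (by positivity : (0:ℝ) ≤ d3) with h3 | h3
  · have hc : c = 0 := by nlinarith [sq_nonneg b, sq_nonneg c]
    have hb : b = 0 := by nlinarith [sq_nonneg b, sq_nonneg c]
    subst hb; subst hc; simp [hd1, hd2, hd3]; nlinarith [sq_nonneg (a*x), sq_nonneg (a*y)]
  have hgm : a^2*(d2*d3) + b^2*(d1*d3) + c^2*(d1*d2) ≤ d1*d2*d3 := by
    have := stormer_amgm (a^2) (b^2) (c^2) (sq_nonneg a) (sq_nonneg b) (sq_nonneg c)
    simp only [hd1, hd2, hd3]; nlinarith [this]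
  have hquad : (0:ℝ) ≤ d1*x^2 + d2*y^2 + d3*z^2 := by positivity
  have hlag : d1*d2*d3 * (a*x + b*y + c*z)^2 ≤
      (a^2*(d2*d3) + b^2*(d1*d3) + c^2*(d1*d2)) * (d1*x^2 + d2*y^2 + d3*z^2) := by
    nlinarith [mul_nonneg h3.le (sq_nonneg (d2*a*y - d1*b*x)),
      mul_nonneg h2.le (sq_nonneg (d3*a*z - d1*c*x)),
      mul_nonneg h1.le (sq_nonneg (d3*b*z - d2*c*y))]
  have hfinal : d1*d2*d3 * (a*x + b*y + c*z)^2 ≤ d1*d2*d3 * (d1*x^2 + d2*y^2 + d3*z^2) :=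
    hlag.trans (mul_le_mul_of_nonneg_right hgm hquad)
  have hpos : 0 < d1*d2*d3 := by positivity
  nlinarith [le_of_mul_le_mul_left hfinal hpos]

set_option maxHeartbeats 1000000 in
/-- The Størmer map (the Choi map with α = 2, β = 0, γ = 1),
`Λ(A) = -A + diag(2A₁₁ + A₃₃, 2A₂₂ + A₁₁, 2A₃₃ + A₂₂)`, maps positive
semidefinite 3×3 matrices to positive semidefinite matrices. -/
theorem stormer_map_positive (A : Matrix (Fin 3) (Fin 3) ℂ)
    (hA : A.PosSemidef) :
    (-A + Matrix.diagonal
        ![2 * A 0 0 + A 2 2, 2 * A 1 1 + A 0 0, 2 * A 2 2 + A 1 1]).PosSemidef := by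
  obtain ⟨B, hB⟩ : ∃ B : Matrix (Fin 3) (Fin 3) ℂ, A = Bᴴ * B := by
    classical
    open scoped MatrixOrder in
    obtain ⟨B, hB⟩ := CStarAlgebra.nonneg_iff_eq_star_mul_self.mp hA.nonneg
    exact ⟨B, hB.trans (by rw [Matrix.star_eq_conjTranspose])⟩
  have hH : A.IsHermitian := hA.1
  have hz : ∀ z : ℂ, (starRingEnd ℂ) z * z = ((‖z‖ : ℝ) : ℂ)^2 := fun z => by
    rw [mul_comm]; exact Complex.mul_conj' z
  rw [Matrix.posSemidef_iff_dotProduct_mulVec]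
  constructor
  · refine Matrix.IsHermitian.add hH.neg ?_
    rw [Matrix.isHermitian_diagonal_iff]
    intro i
    have h0 := hH.apply 0 0
    have h1 := hH.apply 1 1
    have h2 := hH.apply 2 2
    have hsa : ∀ i j : Fin 3, _root_.IsSelfAdjoint (2 * A i i + A j j) := by
      intro i j
      have hi := hH.apply i i
      have hj := hH.apply j j
      show star _ = _
      rw [star_add, star_mul', hi, hj]
      simp
    fin_cases i
    · simpa using hsa 0 2
    · simpa using hsa 1 0
    · simpa using hsa 2 1
  · intro x
    set c0 : EuclideanSpace ℂ (Fin 3) := WithLp.toLp 2 (fun k => B k 0) with hc0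
    set c1 : EuclideanSpace ℂ (Fin 3) := WithLp.toLp 2 (fun k => B k 1) with hc1
    set c2 : EuclideanSpace ℂ (Fin 3) := WithLp.toLp 2 (fun k => B k 2) with hc2
    set yE : EuclideanSpace ℂ (Fin 3) := WithLp.toLp 2 (B *ᵥ x) with hyE
    set p0 : ℝ := ‖c0‖ with hp0
    set p1 : ℝ := ‖c1‖ with hp1
    set p2 : ℝ := ‖c2‖ with hp2
    set q0 : ℝ := ‖x 0‖ with hq0
    set q1 : ℝ := ‖x 1‖ with hq1
    set q2 : ℝ := ‖x 2‖ with hq2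
    have hp : ∀ (cj : EuclideanSpace ℂ (Fin 3)),
        ‖cj‖^2 = ‖cj 0‖^2 + ‖cj 1‖^2 + ‖cj 2‖^2 := by
      intro cj
      rw [EuclideanSpace.norm_eq, Real.sq_sqrt (by positivity)]
      simp [Fin.sum_univ_three]
    -- quadratic form of A
    have hquadA : star x ⬝ᵥ A *ᵥ x = ((‖yE‖ : ℝ) : ℂ)^2 := by
      rw [hB, ← Matrix.mulVec_mulVec, dotProduct_mulVec, Matrix.vecMul_conjTranspose,
        star_star]
      show star yE ⬝ᵥ yE = _
      have hcast : (((‖yE‖ : ℝ) : ℂ))^2 = ((‖yE‖^2 : ℝ) : ℂ) := by push_cast; ring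
      rw [hcast, hp yE]
      simp only [dotProduct, Fin.sum_univ_three, Pi.star_apply, Complex.star_def, hz]
      push_cast
      ring
    -- diagonal entries
    have hdiag : ∀ j : Fin 3, A j j =
        ((‖B 0 j‖ : ℝ) : ℂ)^2 + ((‖B 1 j‖ : ℝ) : ℂ)^2 + ((‖B 2 j‖ : ℝ) : ℂ)^2 := by
      intro j
      rw [hB]
      simp only [Matrix.mul_apply, Matrix.conjTranspose_apply, Fin.sum_univ_three,
        Complex.star_def, hz]
    have hA00 : A 0 0 = ((p0 : ℝ) : ℂ)^2 := by
      rw [hdiag 0]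
      have h := hp c0
      rw [hc0] at h
      norm_cast
      rw [hp0, hc0, h]
    have hA11 : A 1 1 = ((p1 : ℝ) : ℂ)^2 := by
      rw [hdiag 1]
      have h := hp c1
      rw [hc1] at h
      norm_cast
      rw [hp1, hc1, h]
    have hA22 : A 2 2 = ((p2 : ℝ) : ℂ)^2 := by
      rw [hdiag 2]
      have h := hp c2
      rw [hc2] at h
      norm_cast
      rw [hp2, hc2, h]
    -- expansion of the quadratic form
    have hexp : star x ⬝ᵥ (-A + Matrix.diagonal
        ![2 * A 0 0 + A 2 2, 2 * A 1 1 + A 0 0, 2 * A 2 2 + A 1 1]) *ᵥ x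
        = (2 * A 0 0 + A 2 2) * ((starRingEnd ℂ) (x 0) * x 0)
          + (2 * A 1 1 + A 0 0) * ((starRingEnd ℂ) (x 1) * x 1)
          + (2 * A 2 2 + A 1 1) * ((starRingEnd ℂ) (x 2) * x 2)
          - star x ⬝ᵥ A *ᵥ x := by
      simp only [dotProduct, Matrix.mulVec, Matrix.add_apply, Matrix.neg_apply,
        Fin.sum_univ_three, Pi.star_apply, Complex.star_def, Matrix.diagonal_apply_eq,
        Matrix.cons_val_zero, Matrix.cons_val_one, Matrix.head_cons, Matrix.cons_val_two,
        Matrix.tail_cons]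
      rw [Matrix.diagonal_apply_ne _ (show (0:Fin 3) ≠ 1 by decide),
        Matrix.diagonal_apply_ne _ (show (0:Fin 3) ≠ 2 by decide),
        Matrix.diagonal_apply_ne _ (show (1:Fin 3) ≠ 0 by decide),
        Matrix.diagonal_apply_ne _ (show (1:Fin 3) ≠ 2 by decide),
        Matrix.diagonal_apply_ne _ (show (2:Fin 3) ≠ 0 by decide),
        Matrix.diagonal_apply_ne _ (show (2:Fin 3) ≠ 1 by decide)]
      ring
    -- triangle inequality
    have htri : ‖yE‖ ≤ q0 * p0 + q1 * p1 + q2 * p2 := by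
      have hsum : yE = x 0 • c0 + x 1 • c1 + x 2 • c2 := by
        ext k
        show (B *ᵥ x) k = x 0 * B k 0 + x 1 * B k 1 + x 2 * B k 2
        simp only [Matrix.mulVec, dotProduct, Fin.sum_univ_three]
        ring
      calc ‖yE‖ = ‖x 0 • c0 + x 1 • c1 + x 2 • c2‖ := by rw [hsum]
        _ ≤ ‖x 0 • c0‖ + ‖x 1 • c1‖ + ‖x 2 • c2‖ := norm_add₃_le
        _ = q0 * p0 + q1 * p1 + q2 * p2 := by rw [norm_smul, norm_smul, norm_smul]
    -- the real inequality
    have hreal : (0:ℝ) ≤ (2 * p0^2 + p2^2) * q0^2 + (2 * p1^2 + p0^2) * q1^2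
        + (2 * p2^2 + p1^2) * q2^2 - ‖yE‖^2 := by
      have h1 : ‖yE‖^2 ≤ (q0 * p0 + q1 * p1 + q2 * p2)^2 := by
        have := pow_le_pow_left₀ (norm_nonneg (yE : EuclideanSpace ℂ (Fin 3))) htri 2
        simpa using this
      have h2 := stormer_key p0 p1 p2 q0 q1 q2
      nlinarith [h1, h2]
    -- put it together
    rw [hexp, hquadA, hA00, hA11, hA22, hz (x 0), hz (x 1), hz (x 2)]
    have hfin : (2 * ((p0 : ℝ) : ℂ)^2 + ((p2 : ℝ) : ℂ)^2) * ((q0 : ℝ) : ℂ)^2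
        + (2 * ((p1 : ℝ) : ℂ)^2 + ((p0 : ℝ) : ℂ)^2) * ((q1 : ℝ) : ℂ)^2
        + (2 * ((p2 : ℝ) : ℂ)^2 + ((p1 : ℝ) : ℂ)^2) * ((q2 : ℝ) : ℂ)^2
        - ((‖yE‖ : ℝ) : ℂ)^2
        = (((2 * p0^2 + p2^2) * q0^2 + (2 * p1^2 + p0^2) * q1^2
            + (2 * p2^2 + p1^2) * q2^2 - ‖yE‖^2 : ℝ) : ℂ) := by
      push_cast
      ring
    rw [hfin]
    exact Complex.zero_le_real.mpr hreal
end

section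
/- The Breuer map Λ(A) = I·Tr(A) - A - U Aᵀ U† on d×d complex matrices, where d is even and U is a skew-symmetric unitary matrix (Uᵀ = -U, U†U = I), maps every positive semidefinite matrix to a positive semidefinite matrix. -/
open Matrix ComplexOrder

/-- Bessel-type inequality: for `w` orthogonal to `x` with the same norm,
`‖Sx‖² + ‖Sw‖² ≤ ‖S‖_F² ‖x‖²`. -/
lemma breuer_key (d : ℕ) (S : Matrix (Fin d) (Fin d) ℂ) (x w : Fin d → ℂ)
    (horth : ∑ i, (starRingEnd ℂ) (x i) * w i = 0)
    (hnorm : ∑ i, Complex.normSq (w i) = ∑ i, Complex.normSq (x i)) :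
    (∑ i, Complex.normSq ((S *ᵥ x) i)) + (∑ i, Complex.normSq ((S *ᵥ w) i))
      ≤ (∑ i, ∑ j, Complex.normSq (S i j)) * ∑ i, Complex.normSq (x i) := by
  classical
  let x' : EuclideanSpace ℂ (Fin d) := WithLp.toLp 2 x
  let w' : EuclideanSpace ℂ (Fin d) := WithLp.toLp 2 w
  have hnx : ‖x'‖ ^ 2 = ∑ i, Complex.normSq (x i) := by
    rw [EuclideanSpace.norm_eq, Real.sq_sqrt (by positivity)]
    simp [Complex.sq_norm, x']
  have hnw : ‖w'‖ ^ 2 = ∑ i, Complex.normSq (w i) := by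
    rw [EuclideanSpace.norm_eq, Real.sq_sqrt (by positivity)]
    simp [Complex.sq_norm, w']
  have hinner : ∀ (c : EuclideanSpace ℂ (Fin d)) (y : Fin d → ℂ),
      (inner ℂ c (WithLp.toLp 2 y : EuclideanSpace ℂ (Fin d)) : ℂ) = ∑ i, (starRingEnd ℂ) (c i) * y i := by
    intro c y
    simp [PiLp.inner_apply, RCLike.inner_apply, mul_comm]
  by_cases hx0 : x' = 0
  · have hx : x = 0 := congrArg WithLp.ofLp hx0
    have hw2 : ∑ i, Complex.normSq (w i) = 0 := by
      rw [hnorm, hx]; simp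
    have hw : ∀ i, w i = 0 := by
      intro i
      have := (Finset.sum_eq_zero_iff_of_nonneg (fun i _ => Complex.normSq_nonneg (w i))).mp hw2 i (Finset.mem_univ i)
      exact Complex.normSq_eq_zero.mp this
    have hwe : w = 0 := funext hw
    rw [hx, hwe]
    simp [mulVec_zero]
  · have hxpos : (0:ℝ) < ‖x'‖ := norm_pos_iff.mpr hx0
    set t : ℝ := ‖x'‖ with ht
    have hwn : ‖w'‖ = t := by
      have : ‖w'‖ ^ 2 = t ^ 2 := by rw [hnw, hnorm, ← hnx]
      nlinarith [norm_nonneg w', norm_nonneg x']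
    let v : EuclideanSpace ℂ (Fin d) := (t⁻¹ : ℂ) • x'
    let u : EuclideanSpace ℂ (Fin d) := (t⁻¹ : ℂ) • w'
    have hnv : ‖v‖ = 1 := by
      simp only [v, norm_smul, norm_inv, Complex.norm_real, Real.norm_eq_abs, abs_of_pos hxpos, ← ht]
      exact inv_mul_cancel₀ (ne_of_gt hxpos)
    have hnu : ‖u‖ = 1 := by
      simp only [u, norm_smul, norm_inv, Complex.norm_real, Real.norm_eq_abs, abs_of_pos hxpos, hwn]
      exact inv_mul_cancel₀ (ne_of_gt hxpos)
    have hon : Orthonormal ℂ ![v, u] := by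
      rw [orthonormal_iff_ite]
      have hvu : (inner ℂ v u : ℂ) = 0 := by
        simp only [v, u, inner_smul_left, inner_smul_right]
        rw [hinner x' w]
        rw [horth]
        ring
      have huv : (inner ℂ u v : ℂ) = 0 := by
        rw [← inner_conj_symm, hvu]; simp
      have hvv : (inner ℂ v v : ℂ) = 1 := by
        rw [inner_self_eq_norm_sq_to_K, hnv]; norm_num
      have huu : (inner ℂ u u : ℂ) = 1 := by
        rw [inner_self_eq_norm_sq_to_K, hnu]; norm_num
      intro i j
      fin_cases i <;> fin_cases j <;> simp [hvu, huv, hvv, huu, hnv, hnu]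
    -- rows of S
    let c : Fin d → EuclideanSpace ℂ (Fin d) := fun i => WithLp.toLp 2 (fun j => (starRingEnd ℂ) (S i j) : Fin d → ℂ)
    have hrow : ∀ (i : Fin d) (y : Fin d → ℂ), (inner ℂ (c i) (WithLp.toLp 2 y : EuclideanSpace ℂ (Fin d)) : ℂ) = (S *ᵥ y) i := by
      intro i y
      rw [hinner]
      simp [mulVec, dotProduct, c]
    have hbessel : ∀ (y : EuclideanSpace ℂ (Fin d)), ‖(inner ℂ v y : ℂ)‖ ^ 2 + ‖(inner ℂ u y : ℂ)‖ ^ 2 ≤ ‖y‖ ^ 2 := by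
      intro y
      have := hon.sum_inner_products_le (s := Finset.univ) (x := y)
      simpa [Fin.sum_univ_two] using this
    have hstep : ∀ i : Fin d,
        Complex.normSq ((S *ᵥ x) i) + Complex.normSq ((S *ᵥ w) i)
          ≤ t ^ 2 * ∑ j, Complex.normSq (S i j) := by
      intro i
      have hb := hbessel (c i)
      have hcx : (inner ℂ v (c i) : ℂ) = (starRingEnd ℂ) ((t:ℂ)⁻¹) * (starRingEnd ℂ) ((S *ᵥ x) i) := by
        rw [← inner_conj_symm, inner_smul_right, hrow i x]
        simp
      have hcw : (inner ℂ u (c i) : ℂ) = (starRingEnd ℂ) ((t:ℂ)⁻¹) * (starRingEnd ℂ) ((S *ᵥ w) i) := by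
        rw [← inner_conj_symm, inner_smul_right, hrow i w]
        simp
      have hnc : ‖c i‖ ^ 2 = ∑ j, Complex.normSq (S i j) := by
        rw [EuclideanSpace.norm_eq, Real.sq_sqrt (by positivity)]
        simp [Complex.sq_norm, c]
      rw [hcx, hcw, hnc] at hb
      have htinv : ‖(starRingEnd ℂ) ((t:ℂ)⁻¹)‖ = t⁻¹ := by
        simp [abs_of_pos hxpos, ht]
      rw [norm_mul, norm_mul, htinv] at hb
      have h1 : ∀ z : ℂ, ‖(starRingEnd ℂ) z‖ ^ 2 = Complex.normSq z := by
        intro z; simp [Complex.sq_norm]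
      rw [mul_pow, mul_pow, h1, h1] at hb
      have ht2 : (0:ℝ) < t ^ 2 := by positivity
      calc Complex.normSq ((S *ᵥ x) i) + Complex.normSq ((S *ᵥ w) i)
          = t ^ 2 * ((t⁻¹)^2 * Complex.normSq ((S *ᵥ x) i) + (t⁻¹)^2 * Complex.normSq ((S *ᵥ w) i)) := by
            field_simp
        _ ≤ t ^ 2 * ∑ j, Complex.normSq (S i j) := by
            exact mul_le_mul_of_nonneg_left hb (le_of_lt ht2)
    calc (∑ i, Complex.normSq ((S *ᵥ x) i)) + (∑ i, Complex.normSq ((S *ᵥ w) i))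
        = ∑ i, (Complex.normSq ((S *ᵥ x) i) + Complex.normSq ((S *ᵥ w) i)) := by
          rw [Finset.sum_add_distrib]
      _ ≤ ∑ i, t ^ 2 * ∑ j, Complex.normSq (S i j) := Finset.sum_le_sum (fun i _ => hstep i)
      _ = (∑ i, ∑ j, Complex.normSq (S i j)) * ∑ i, Complex.normSq (x i) := by
          rw [← Finset.mul_sum, ← hnx]
          ring

/-- The Breuer map `Λ(A) = I·Tr(A) - A - U Aᵀ U†`, for `d` even and `U` a
skew-symmetric unitary, maps positive semidefinite matrices to positive
semidefinite matrices. -/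
theorem breuer_map_positive (d : ℕ) (hd : Even d)
    (U : Matrix (Fin d) (Fin d) ℂ)
    (hUskew : Uᵀ = -U) (hUunit : Uᴴ * U = 1)
    (A : Matrix (Fin d) (Fin d) ℂ) (hA : A.PosSemidef) :
    (A.trace • (1 : Matrix (Fin d) (Fin d) ℂ) - A - U * Aᵀ * Uᴴ).PosSemidef := by
  classical
  have hAH : Aᴴ = A := hA.1
  have htr : star A.trace = A.trace := by
    rw [← Matrix.trace_conjTranspose, hAH]
  have hAt : (Aᵀ)ᴴ = Aᵀ := by
    ext i j
    have := congrFun (congrFun hAH j) i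
    simp only [conjTranspose_apply] at this ⊢
    simpa [transpose_apply] using this
  have hUU : U * Uᴴ = 1 := mul_eq_one_comm.mp hUunit
  apply PosSemidef.of_dotProduct_mulVec_nonneg
  · show _ᴴ = _
    rw [conjTranspose_sub, conjTranspose_sub, conjTranspose_smul, conjTranspose_one,
      conjTranspose_mul, conjTranspose_mul, conjTranspose_conjTranspose, hAH, hAt, htr,
      Matrix.mul_assoc]
  · intro x
    set S := (open scoped MatrixOrder in CFC.sqrt A) with hSdef
    have hSH : Sᴴ = S := by open scoped MatrixOrder in exact (CFC.sqrt_nonneg A).posSemidef.1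
    have hSS : S * S = A := by open scoped MatrixOrder in exact CFC.sqrt_mul_sqrt_self A hA.nonneg
    set u : Fin d → ℂ := Uᴴ *ᵥ x with hu
    set w : Fin d → ℂ := star u with hw
    -- orthogonality of x and w
    have hU' : ∀ i j, U j i = - U i j := by
      intro i j
      have := congrFun (congrFun hUskew i) j
      simpa [transpose_apply] using this
    have horth : ∑ i, (starRingEnd ℂ) (x i) * w i = 0 := by
      have hwi : ∀ i, w i = ∑ j, U j i * (starRingEnd ℂ) (x j) := by
        intro i
        simp only [hw, Pi.star_apply, hu, mulVec, dotProduct, star_sum, star_mul',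
          conjTranspose_apply, RCLike.star_def]
        refine Finset.sum_congr rfl fun j _ => ?_
        simp [mul_comm]
      have hq : (∑ i, ∑ j, (starRingEnd ℂ) (x i) * (U j i * (starRingEnd ℂ) (x j)))
          = -(∑ i, ∑ j, (starRingEnd ℂ) (x i) * (U j i * (starRingEnd ℂ) (x j))) := by
        conv_lhs => rw [Finset.sum_comm]
        rw [← Finset.sum_neg_distrib]
        refine Finset.sum_congr rfl fun i _ => ?_
        rw [← Finset.sum_neg_distrib]
        refine Finset.sum_congr rfl fun j _ => ?_
        rw [hU' j i]
        ring
      have hq0 : (∑ i, ∑ j, (starRingEnd ℂ) (x i) * (U j i * (starRingEnd ℂ) (x j))) = 0 := by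
        linear_combination hq / 2
      calc ∑ i, (starRingEnd ℂ) (x i) * w i
          = ∑ i, (starRingEnd ℂ) (x i) * ∑ j, U j i * (starRingEnd ℂ) (x j) := by
            refine Finset.sum_congr rfl fun i _ => by rw [hwi i]
        _ = ∑ i, ∑ j, (starRingEnd ℂ) (x i) * (U j i * (starRingEnd ℂ) (x j)) := by
            refine Finset.sum_congr rfl fun i _ => Finset.mul_sum _ _ _
        _ = 0 := hq0
    -- norms equal
    have hnormc : ∀ y : Fin d → ℂ, star y ⬝ᵥ y = ((∑ i, Complex.normSq (y i) : ℝ) : ℂ) := by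
      intro y
      simp only [dotProduct, Pi.star_apply, RCLike.star_def]
      push_cast
      refine Finset.sum_congr rfl fun i _ => ?_
      rw [Complex.normSq_eq_conj_mul_self]
    have huu' : star u ⬝ᵥ u = star x ⬝ᵥ x := by
      rw [hu, star_mulVec, conjTranspose_conjTranspose, ← dotProduct_mulVec, mulVec_mulVec, hUU, one_mulVec]
    have hnorm : ∑ i, Complex.normSq (w i) = ∑ i, Complex.normSq (x i) := by
      have h1 : ∀ i, Complex.normSq (w i) = Complex.normSq (u i) := by
        intro i; simp [hw, Complex.normSq_conj]
      have h2 : ((∑ i, Complex.normSq (u i) : ℝ) : ℂ) = ((∑ i, Complex.normSq (x i) : ℝ) : ℂ) := by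
        rw [← hnormc, ← hnormc, huu']
      have h3 := Complex.ofReal_injective h2
      rw [Finset.sum_congr rfl fun i _ => h1 i, h3]
    -- the three quadratic-form pieces
    have hvm : ∀ y : Fin d → ℂ, star y ᵥ* S = star (S *ᵥ y) := by
      intro y; rw [star_mulVec, hSH]
    have hqA : star x ⬝ᵥ (A *ᵥ x) = ((∑ i, Complex.normSq ((S *ᵥ x) i) : ℝ) : ℂ) := by
      rw [← hSS, ← mulVec_mulVec, dotProduct_mulVec, hvm]
      exact hnormc _
    have hqA' : star w ⬝ᵥ (A *ᵥ w) = ((∑ i, Complex.normSq ((S *ᵥ w) i) : ℝ) : ℂ) := by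
      rw [← hSS, ← mulVec_mulVec, dotProduct_mulVec, hvm]
      exact hnormc _
    have hqU : star x ⬝ᵥ ((U * Aᵀ * Uᴴ) *ᵥ x) = star w ⬝ᵥ (A *ᵥ w) := by
      have h1 : (U * Aᵀ * Uᴴ) *ᵥ x = U *ᵥ (Aᵀ *ᵥ u) := by
        rw [hu, mulVec_mulVec, mulVec_mulVec, Matrix.mul_assoc]
      have hvmU : star x ᵥ* U = star u := by
        rw [hu, star_mulVec, conjTranspose_conjTranspose]
      rw [h1, dotProduct_mulVec (star x) U, hvmU]
      show star u ⬝ᵥ (Aᵀ *ᵥ u) = star w ⬝ᵥ (A *ᵥ w)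
      simp only [dotProduct, mulVec, Pi.star_apply, hw, transpose_apply, Finset.mul_sum, star_star]
      rw [Finset.sum_comm]
      refine Finset.sum_congr rfl fun i _ => Finset.sum_congr rfl fun j _ => ?_
      ring
    have hSsym : ∀ i j, S j i = (starRingEnd ℂ) (S i j) := by
      intro i j
      have := congrFun (congrFun hSH j) i
      rw [conjTranspose_apply] at this
      exact this.symm
    have htrS : A.trace = ((∑ i, ∑ j, Complex.normSq (S i j) : ℝ) : ℂ) := by
      rw [← hSS, Matrix.trace]
      push_cast
      refine Finset.sum_congr rfl fun i _ => ?_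
      rw [Matrix.diag_apply, Matrix.mul_apply]
      push_cast
      refine Finset.sum_congr rfl fun j _ => ?_
      rw [hSsym i j, Complex.mul_conj]
    -- put together
    have key := breuer_key d S x w horth hnorm
    have expand : star x ⬝ᵥ ((A.trace • (1 : Matrix (Fin d) (Fin d) ℂ) - A - U * Aᵀ * Uᴴ) *ᵥ x)
        = ((((∑ i, ∑ j, Complex.normSq (S i j)) * (∑ i, Complex.normSq (x i))
            - (∑ i, Complex.normSq ((S *ᵥ x) i)) - (∑ i, Complex.normSq ((S *ᵥ w) i)) : ℝ)) : ℂ) := by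
      rw [sub_mulVec, sub_mulVec, dotProduct_sub, dotProduct_sub, smul_mulVec, one_mulVec,
        dotProduct_smul, hqA, hqU, hqA', htrS, hnormc x]
      simp only [smul_eq_mul]
      push_cast
      ring
    rw [expand]
    rw [Complex.le_def]
    constructor
    · simp only [Complex.zero_re, Complex.ofReal_re]
      linarith [key]
    · simp
end
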